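/- arXiv:1609.05397 — 5 statements merged into one kernel-verified Lean document; each statement's English description precedes it below -/
import Mathlib

section
/- Let c₀ > 0. There exists δ₀ = δ₀(c₀) > 0 such that for every δ ∈ (0, δ₀] the following holds: if φ : [0,∞) → ℝ is twice continuously differentiable, satisfies (1 − δ + φ)φ'' + (φ')² + (z/2)φ' = 0 on (0,∞), with φ(0) = 0, φ(z) → δ as z → ∞, and |φ(z)| ≤ c₀ δ for all z ≥ 0, then φ'(0) > 0. -/
/-!
With `D = c + φ` (here `c = 1 - δ`), the profile equation says that the flux `v = D φ'` solves the
linear equation `v' = -(z / (2 D)) v`, so by the integrating factor `exp ∫ z / (2 D)` the sign of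
`v`, hence of `φ'`, is that of `φ'(0)` as long as `D > 0`. For `δ` small the bound `|φ| ≤ c₀ δ`
keeps `D ≥ 1/2`. If `φ'(0) ≤ 0`, then `φ` is nonincreasing from `φ(0) = 0` and cannot tend to
`δ > 0`.
-/

open Set Filter Real

theorem exists_hasDerivAt_of_continuousOn_Ici {a : ℝ → ℝ} (ha : ContinuousOn a (Ici 0)) :
    ∃ G : ℝ → ℝ, ∀ z, 0 ≤ z → HasDerivAt G (a z) z := by
  have hext : Continuous fun z => a (max z 0) :=
    ha.comp_continuous (continuous_id.max continuous_const) fun z => le_max_right z 0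
  refine ⟨fun u => ∫ t in (0 : ℝ)..u, a (max t 0), fun z hz => ?_⟩
  simpa [max_eq_left hz] using (hext.integral_hasStrictDerivAt 0 z).hasDerivAt

theorem nonpos_of_hasDerivAt_eq_neg_mul {a v : ℝ → ℝ} (ha : ContinuousOn a (Ici 0))
    (hv : ContinuousOn v (Ici 0)) (hv' : ∀ z, 0 < z → HasDerivAt v (-(a z * v z)) z)
    (hv0 : v 0 ≤ 0) {z : ℝ} (hz : 0 ≤ z) : v z ≤ 0 := by
  obtain ⟨G, hG⟩ := exists_hasDerivAt_of_continuousOn_Ici ha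
  have hGc : ContinuousOn G (Ici 0) := fun x hx => (hG x hx).continuousAt.continuousWithinAt
  have hw : AntitoneOn (fun x => v x * exp (G x)) (Ici 0) := by
    refine antitoneOn_of_hasDerivWithinAt_nonpos (f' := fun _ => 0) (convex_Ici 0)
      (hv.mul hGc.rexp) (fun x hx => ?_) fun _ _ => le_rfl
    rw [interior_Ici] at hx
    exact (((hv' x hx).mul (hG x hx.le).exp).congr_deriv (by ring)).hasDerivWithinAt
  have hwz := hw self_mem_Ici hz hz
  exact nonpos_of_mul_nonpos_left (hwz.trans (mul_nonpos_of_nonpos_of_nonneg hv0 (exp_pos _).le))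
    (exp_pos _)

section Profile

variable {c : ℝ} {φ : ℝ → ℝ}

theorem hasDerivAt_flux (hφ : ContDiffOn ℝ 2 φ (Ici 0)) {z : ℝ} (hz : 0 < z)
    (hode : (c + φ z) * deriv (deriv φ) z + (deriv φ z) ^ 2 + (z / 2) * deriv φ z = 0)
    (hD : c + φ z ≠ 0) :
    HasDerivAt (fun y => (c + φ y) * derivWithin φ (Ici 0) y)
      (-(z / (2 * (c + φ z)) * ((c + φ z) * derivWithin φ (Ici 0) z))) z := by
  have hnhds : Ioi 0 ∈ nhds z := Ioi_mem_nhds hz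
  have hφ' : ContDiffOn ℝ 1 (deriv φ) (Ioi 0) :=
    (hφ.mono Ioi_subset_Ici_self).deriv_of_isOpen isOpen_Ioi (by norm_num)
  have hd1 : HasDerivAt φ (deriv φ z) z :=
    ((hφ.differentiableOn (by norm_num) z hz.le).differentiableAt (Ici_mem_nhds hz)).hasDerivAt
  have hd2 : HasDerivAt (deriv φ) (deriv (deriv φ) z) z :=
    ((hφ'.differentiableOn one_ne_zero).differentiableAt hnhds).hasDerivAt
  have hwithin : derivWithin φ (Ici 0) =ᶠ[nhds z] deriv φ := by
    filter_upwards [hnhds] with y hy using derivWithin_of_mem_nhds (Ici_mem_nhds hy)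
  refine ((hd1.const_add c).mul (hd2.congr_of_eventuallyEq hwithin)).congr_deriv ?_
  rw [hwithin.eq_of_nhds]
  field_simp
  linear_combination 2 * hode

theorem derivWithin_Ici_pos_of_profile (hφ : ContDiffOn ℝ 2 φ (Ici 0))
    (hode : ∀ z, 0 < z →
      (c + φ z) * deriv (deriv φ) z + (deriv φ z) ^ 2 + (z / 2) * deriv φ z = 0)
    (hD : ∀ z, 0 ≤ z → 0 < c + φ z) (hφ0 : φ 0 = 0) {δ : ℝ} (hδ : 0 < δ)
    (hlim : Tendsto φ atTop (nhds δ)) :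
    0 < derivWithin φ (Ici 0) 0 := by
  by_contra! hneg
  have hDc : ContinuousOn (fun z => c + φ z) (Ici 0) := continuousOn_const.add hφ.continuousOn
  have ha : ContinuousOn (fun z => z / (2 * (c + φ z))) (Ici 0) :=
    continuousOn_id.div (continuousOn_const.mul hDc) fun z hz => (mul_pos two_pos (hD z hz)).ne'
  have hv : ContinuousOn (fun z => (c + φ z) * derivWithin φ (Ici 0) z) (Ici 0) :=
    hDc.mul (hφ.continuousOn_derivWithin (uniqueDiffOn_Ici 0) (by norm_num))
  have hv0 : (c + φ 0) * derivWithin φ (Ici 0) 0 ≤ 0 :=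
    mul_nonpos_of_nonneg_of_nonpos (hD 0 le_rfl).le hneg
  have hflux : ∀ z, 0 ≤ z → (c + φ z) * derivWithin φ (Ici 0) z ≤ 0 := fun z =>
    nonpos_of_hasDerivAt_eq_neg_mul ha hv
      (fun z hz => hasDerivAt_flux hφ hz (hode z hz) (hD z hz.le).ne') hv0
  have hanti : AntitoneOn φ (Ici 0) := by
    refine antitoneOn_of_hasDerivWithinAt_nonpos (f' := derivWithin φ (Ici 0)) (convex_Ici 0)
      hφ.continuousOn (fun x hx => ?_) fun x hx => ?_ <;>
      simp only [interior_Ici, mem_Ioi] at hx ⊢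
    · exact ((hφ.differentiableOn (by norm_num) x hx.le).hasDerivWithinAt).mono
        Ioi_subset_Ici_self
    · exact nonpos_of_mul_nonpos_right (hflux x hx.le) (hD x hx.le)
  have hle : ∀ᶠ z in atTop, φ z ≤ 0 := by
    filter_upwards [eventually_ge_atTop 0] with z hz
    simpa [hφ0] using hanti self_mem_Ici hz hz
  exact (le_of_tendsto hlim hle).not_gt hδ

end Profile

theorem stmt2 (c₀ : ℝ) (hc₀ : 0 < c₀) :
    ∃ δ₀ > (0:ℝ), ∀ δ : ℝ, 0 < δ → δ ≤ δ₀ →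
      ∀ φ : ℝ → ℝ, ContDiffOn ℝ 2 φ (Set.Ici 0) →
        (∀ z : ℝ, 0 < z →
          (1 - δ + φ z) * deriv (deriv φ) z + (deriv φ z)^2 + (z/2) * deriv φ z = 0) →
        φ 0 = 0 →
        Filter.Tendsto φ Filter.atTop (nhds δ) →
        (∀ z : ℝ, 0 ≤ z → |φ z| ≤ c₀ * δ) →
        0 < derivWithin φ (Set.Ici 0) 0 := by
  refine ⟨1 / (2 * (1 + c₀)), by positivity, fun δ hδ hδδ₀ φ hφ hode hφ0 hlim hbd => ?_⟩
  have hsmall : δ * (1 + c₀) ≤ 1 / 2 := by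
    rw [le_div_iff₀ (by positivity)] at hδδ₀
    linarith
  refine derivWithin_Ici_pos_of_profile hφ hode (fun z hz => ?_) hφ0 hδ hlim
  nlinarith [(abs_le.1 (hbd z hz)).1]
end

section
/- Let δ > 0, set E(x,η) := e_δ(η/√x) and z := η/√x. For all integers m, l, k ≥ 0 and every p ∈ [2,∞] there is a constant C = C(m,l,k), independent of δ and of x, such that for all x ≥ 1: ‖ z^m ∂_η^l ∂_x^k ( E(x,η) − δ ) ‖_{L^p_η(0,∞)} ≤ C δ x^{−k − l/2 + 1/(2p)}, with the convention 1/(2p) = 0 when p = ∞. -/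
open Real MeasureTheory
open scoped ENNReal

/-- The Gaussian front profile `e_δ(z) = (δ/√π) ∫₀^z e^{-t²/4} dt`. -/
noncomputable def eDelta (δ : ℝ) (z : ℝ) : ℝ :=
  (δ / Real.sqrt Real.pi) * ∫ t in (0:ℝ)..z, Real.exp (-t^2/4)

/-!
Write `eDelta δ (η/√x) - δ = δ F(η/√x)` with `F(z) = (1/√π) ∫₀^z e^{-t²/4} dt - 1`
(`frontDefect`). By self-similarity, `∂_η^l ∂_x^k` of it is `δ x^{-k-l/2} F_k^{(l)}(η/√x)`, where
`F_0 = F` and `F_{k+1}(z) = -k F_k(z) - (z/2) F_k'(z)` (`scalingDeriv F k`). Apart from `F` itself,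
every `F_k^{(l)}` is a polynomial times `e^{-z²/4}`, while `F` is minus a Gaussian tail; hence
`|z^m F_k^{(l)}(z)| ≤ M e^{-z²/16}` for `z ≥ 0`, and the substitution `z = η/√x` costs exactly the
factor `x^{1/(2p)}` in `L^p_η(0,∞)`.
-/

open Filter Topology Polynomial
open scoped ContDiff

lemma tendsto_eval_mul_exp_neg_mul_sq_cocompact (Q : ℝ[X]) {a : ℝ} (ha : 0 < a) :
    Tendsto (fun z => Q.eval z * exp (-a * z ^ 2)) (cocompact ℝ) (𝓝 0) := by
  induction Q using Polynomial.induction_on' with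
  | add P R hP hR => simpa [add_mul] using hP.add hR
  | monomial n c =>
    have h := (tendsto_rpow_abs_mul_exp_neg_mul_sq_cocompact ha n).const_mul |c|
    rw [mul_zero] at h
    refine tendsto_zero_iff_norm_tendsto_zero.mpr (h.congr fun z => ?_)
    simp [mul_assoc]

lemma exists_abs_eval_mul_exp_neg_mul_sq_le (Q : ℝ[X]) {a : ℝ} (ha : 0 < a) :
    ∃ M > 0, ∀ z, |Q.eval z| * exp (-a * z ^ 2) ≤ M := by
  let f : ZeroAtInftyContinuousMap ℝ ℝ :=
    ⟨⟨_, by fun_prop⟩, tendsto_eval_mul_exp_neg_mul_sq_cocompact Q ha⟩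
  obtain ⟨M, hM⟩ := f.isBounded_range.exists_norm_le
  refine ⟨max M 1, by positivity, fun z => le_max_of_le_left ?_⟩
  simpa [f, abs_mul] using hM _ ⟨z, rfl⟩

noncomputable def gauss (z : ℝ) : ℝ := exp (-z ^ 2 / 4)

lemma hasDerivAt_gauss (z : ℝ) : HasDerivAt gauss (-(z / 2) * gauss z) z := by
  have h := ((hasDerivAt_pow 2 z).const_mul (-1 / 4 : ℝ)).exp
  refine (h.congr_deriv ?_).congr_of_eventuallyEq (.of_forall fun x => ?_)
  · simp only [gauss]; push_cast; ring_nf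
  · simp only [gauss]; ring_nf

lemma continuous_gauss : Continuous gauss := by unfold gauss; fun_prop

lemma contDiff_gauss : ContDiff ℝ ∞ gauss := by unfold gauss; fun_prop

def IsPolyGauss (f : ℝ → ℝ) : Prop := ∃ Q : ℝ[X], ∀ z, f z = Q.eval z * gauss z

namespace IsPolyGauss

variable {f g : ℝ → ℝ}

lemma congr (hf : IsPolyGauss f) (h : ∀ z, f z = g z) : IsPolyGauss g := by
  obtain ⟨Q, hQ⟩ := hf
  exact ⟨Q, fun z => (h z).symm.trans (hQ z)⟩

lemma add (hf : IsPolyGauss f) (hg : IsPolyGauss g) : IsPolyGauss (fun z => f z + g z) := by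
  obtain ⟨Q, hQ⟩ := hf
  obtain ⟨R, hR⟩ := hg
  exact ⟨Q + R, fun z => by simp [hQ, hR, add_mul]⟩

lemma poly_mul (hf : IsPolyGauss f) (P : ℝ[X]) : IsPolyGauss (fun z => P.eval z * f z) := by
  obtain ⟨Q, hQ⟩ := hf
  exact ⟨P * Q, fun z => by simp [hQ, mul_assoc]⟩

lemma hasDerivAt (hf : IsPolyGauss f) :
    ∃ Q : ℝ[X], ∀ z, HasDerivAt f (Q.eval z * gauss z) z := by
  obtain ⟨Q, hQ⟩ := hf
  refine ⟨derivative Q - C (1 / 2) * X * Q, fun z => ?_⟩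
  rw [show f = fun z => Q.eval z * gauss z from funext hQ]
  refine ((Q.hasDerivAt z).mul (hasDerivAt_gauss z)).congr_deriv ?_
  simp only [eval_sub, eval_mul, eval_C, eval_X]
  ring

lemma deriv (hf : IsPolyGauss f) : IsPolyGauss (deriv f) := by
  obtain ⟨Q, hQ⟩ := hf.hasDerivAt
  exact ⟨Q, fun z => (hQ z).deriv⟩

lemma iteratedDeriv (hf : IsPolyGauss f) (l : ℕ) : IsPolyGauss (iteratedDeriv l f) := by
  induction l with
  | zero => simpa using hf
  | succ l ih => rw [iteratedDeriv_succ]; exact ih.deriv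

lemma exists_abs_le (hf : IsPolyGauss f) : ∃ M > 0, ∀ z, |f z| ≤ M * exp (-z ^ 2 / 16) := by
  obtain ⟨Q, hQ⟩ := hf
  obtain ⟨M, hM0, hM⟩ := exists_abs_eval_mul_exp_neg_mul_sq_le Q (a := 3 / 16) (by norm_num)
  refine ⟨M, hM0, fun z => ?_⟩
  have hsplit : gauss z = exp (-(3 / 16) * z ^ 2) * exp (-z ^ 2 / 16) := by
    rw [gauss, ← exp_add]; ring_nf
  rw [hQ, hsplit, ← mul_assoc, abs_mul, abs_of_pos (exp_pos _)]
  gcongr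
  simpa [abs_mul, abs_of_pos (exp_pos _)] using hM z

end IsPolyGauss

noncomputable def frontDefect (z : ℝ) : ℝ := (√π)⁻¹ * (∫ t in (0 : ℝ)..z, gauss t) - 1

lemma eDelta_sub_self (δ z : ℝ) : eDelta δ z - δ = δ * frontDefect z := by
  simp only [eDelta, frontDefect, gauss]
  ring

lemma hasDerivAt_frontDefect (z : ℝ) :
    HasDerivAt frontDefect ((√π)⁻¹ * gauss z) z :=
  ((intervalIntegral.integral_hasDerivAt_right (continuous_gauss.intervalIntegrable _ _)
    (continuous_gauss.stronglyMeasurableAtFilter _ _) continuous_gauss.continuousAt).const_mul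
    _).sub_const 1

lemma deriv_frontDefect : deriv frontDefect = fun z => (√π)⁻¹ * gauss z :=
  funext fun z => (hasDerivAt_frontDefect z).deriv

lemma contDiff_frontDefect : ContDiff ℝ ∞ frontDefect := by
  rw [contDiff_infty_iff_deriv, deriv_frontDefect]
  exact ⟨fun z => (hasDerivAt_frontDefect z).differentiableAt,
    contDiff_const.mul contDiff_gauss⟩

lemma isPolyGauss_deriv_frontDefect : IsPolyGauss (deriv frontDefect) :=
  ⟨C (√π)⁻¹, fun z => by simp [deriv_frontDefect]⟩

lemma gauss_eq_exp (t : ℝ) : gauss t = exp (-(1 / 4) * t ^ 2) := by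
  rw [gauss]; ring_nf

lemma integrable_gauss : Integrable gauss := by
  simpa only [← funext gauss_eq_exp] using integrable_exp_neg_mul_sq (b := 1 / 4) (by norm_num)

lemma integral_Ioi_gauss : ∫ t in Set.Ioi 0, gauss t = √π := by
  simp only [gauss_eq_exp, integral_gaussian_Ioi]
  rw [show π / (1 / 4) = 2 ^ 2 * π by ring, sqrt_mul (by positivity), sqrt_sq (by norm_num)]
  ring

lemma frontDefect_eq_neg_integral_Ioi {z : ℝ} (hz : 0 ≤ z) :
    frontDefect z = -((√π)⁻¹ * ∫ t in Set.Ioi z, gauss t) := by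
  have hsplit : (∫ t in (0 : ℝ)..z, gauss t) + ∫ t in Set.Ioi z, gauss t = √π := by
    rw [intervalIntegral.integral_of_le hz, ← setIntegral_union (Set.Ioc_disjoint_Ioi le_rfl)
      measurableSet_Ioi integrable_gauss.integrableOn integrable_gauss.integrableOn,
      Set.Ioc_union_Ioi_eq_Ioi hz, integral_Ioi_gauss]
  have hπ : √π ≠ 0 := by positivity
  rw [frontDefect, eq_sub_of_add_eq hsplit]
  field_simp
  ring

-- For `t ≥ z ≥ 0`, `t²/4 ≥ z²/8 + t²/8`: half of the Gaussian decay is spent on the tail.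
lemma integral_Ioi_gauss_le {z : ℝ} (hz : 0 ≤ z) :
    ∫ t in Set.Ioi z, gauss t ≤ exp (-z ^ 2 / 8) * √(2 * π) := by
  have hint : Integrable fun t : ℝ => exp (-(1 / 8) * t ^ 2) :=
    integrable_exp_neg_mul_sq (by norm_num)
  calc ∫ t in Set.Ioi z, gauss t
      ≤ ∫ t in Set.Ioi z, exp (-z ^ 2 / 8) * exp (-(1 / 8) * t ^ 2) := by
        refine setIntegral_mono_on integrable_gauss.integrableOn
          (hint.const_mul _).integrableOn measurableSet_Ioi fun t ht => ?_
        have hzt : z ^ 2 ≤ t ^ 2 := pow_le_pow_left₀ hz (Set.mem_Ioi.mp ht).le 2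
        rw [gauss, ← exp_add]
        exact exp_le_exp.mpr (by linarith)
    _ ≤ exp (-z ^ 2 / 8) * ∫ t in Set.Ioi 0, exp (-(1 / 8) * t ^ 2) := by
        rw [integral_const_mul]
        gcongr _ * ?_
        exact setIntegral_mono_set hint.integrableOn (.of_forall fun t => (exp_pos _).le)
          (Set.Ioi_subset_Ioi hz).eventuallyLE
    _ = exp (-z ^ 2 / 8) * √(2 * π) := by
        rw [integral_gaussian_Ioi, show π / (1 / 8) = 2 ^ 2 * (2 * π) by ring,
          sqrt_mul (by positivity), sqrt_sq (by norm_num)]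
        ring

lemma abs_frontDefect_le {z : ℝ} (hz : 0 ≤ z) :
    |frontDefect z| ≤ √2 * exp (-z ^ 2 / 8) := by
  have hnonneg : 0 ≤ ∫ t in Set.Ioi z, gauss t :=
    setIntegral_nonneg measurableSet_Ioi fun t _ => (exp_pos _).le
  rw [frontDefect_eq_neg_integral_Ioi hz, abs_neg, abs_of_nonneg (by positivity)]
  calc (√π)⁻¹ * ∫ t in Set.Ioi z, gauss t
      ≤ (√π)⁻¹ * (exp (-z ^ 2 / 8) * √(2 * π)) := by
        gcongr; exact integral_Ioi_gauss_le hz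
    _ = √2 * exp (-z ^ 2 / 8) := by
        have hπ : √π ≠ 0 := by positivity
        rw [sqrt_mul zero_le_two]
        field_simp

-- `∂ₓ (x^{-k} φ(η/√x)) = x^{-k-1} (-k φ(z) - (z/2) φ'(z))` with `z = η/√x`.
noncomputable def scalingDeriv (F : ℝ → ℝ) : ℕ → ℝ → ℝ
  | 0 => F
  | k + 1 => fun z => -k * scalingDeriv F k z - z / 2 * deriv (scalingDeriv F k) z

section scalingDeriv

variable {F : ℝ → ℝ}

lemma contDiff_scalingDeriv (hF : ContDiff ℝ ∞ F) (k : ℕ) :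
    ContDiff ℝ ∞ (scalingDeriv F k) := by
  induction k with
  | zero => exact hF
  | succ k ih =>
    have hd : ContDiff ℝ ∞ (deriv (scalingDeriv F k)) := (contDiff_infty_iff_deriv.mp ih).2
    exact (contDiff_const.mul ih).sub ((contDiff_id.div_const 2).mul hd)

lemma isPolyGauss_scalingDeriv_succ (hF : IsPolyGauss (deriv F)) (k : ℕ) :
    IsPolyGauss (scalingDeriv F (k + 1)) := by
  induction k with
  | zero =>
    refine (hF.poly_mul (C (-(1 / 2)) * X)).congr fun z => ?_
    simp only [scalingDeriv, eval_mul, eval_C, eval_X]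
    push_cast; ring
  | succ k ih =>
    refine ((ih.poly_mul (C (-(k + 1 : ℝ)))).add (ih.deriv.poly_mul (C (-(1 / 2)) * X))).congr
      fun z => ?_
    simp only [scalingDeriv, eval_mul, eval_C, eval_X]
    push_cast; ring

lemma hasDerivAt_div_sqrt (η : ℝ) {x : ℝ} (hx : 0 < x) :
    HasDerivAt (fun x' => η / √x') (-(η / √x) / (2 * x)) x := by
  have hs : √x ≠ 0 := (sqrt_pos.mpr hx).ne'
  have h := ((hasDerivAt_sqrt hx.ne').inv hs).const_mul η
  refine (h.congr_deriv ?_).congr_of_eventuallyEq (.of_forall fun y => div_eq_mul_inv η √y)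
  rw [sq_sqrt hx.le]
  field_simp

lemma iteratedDeriv_comp_div_sqrt (hF : ContDiff ℝ ∞ F) (η : ℝ) (k : ℕ) {x : ℝ} (hx : 0 < x) :
    iteratedDeriv k (fun x' => F (η / √x')) x =
      x ^ (-(k : ℝ)) * scalingDeriv F k (η / √x) := by
  induction k generalizing x with
  | zero => simp [scalingDeriv]
  | succ k ih =>
    have hev : iteratedDeriv k (fun x' => F (η / √x')) =ᶠ[𝓝 x]
        fun x' => x' ^ (-(k : ℝ)) * scalingDeriv F k (η / √x') :=
      eventually_of_mem (Ioi_mem_nhds hx) fun x' hx' => ih hx'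
    have hφ : Differentiable ℝ (scalingDeriv F k) :=
      (contDiff_scalingDeriv hF k).differentiable (by simp)
    have hd : HasDerivAt (fun x' => x' ^ (-(k : ℝ)) * scalingDeriv F k (η / √x'))
        (-k * x ^ (-(k : ℝ) - 1) * scalingDeriv F k (η / √x) +
          x ^ (-(k : ℝ)) * (deriv (scalingDeriv F k) (η / √x) * (-(η / √x) / (2 * x)))) x :=
      (hasDerivAt_rpow_const (Or.inl hx.ne')).mul
        ((hφ _).hasDerivAt.comp x (hasDerivAt_div_sqrt η hx))
    rw [iteratedDeriv_succ, hev.deriv_eq, hd.deriv, scalingDeriv]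
    have hpow : x ^ (-(k : ℝ) - 1) = x ^ (-(k : ℝ)) / x := by
      rw [rpow_sub_one hx.ne']
    have hpow' : x ^ (-((k + 1 : ℕ) : ℝ)) = x ^ (-(k : ℝ)) / x := by
      rw [← hpow]; push_cast; ring_nf
    rw [hpow, hpow']
    field_simp
    ring

end scalingDeriv

lemma iteratedDeriv_eDelta_sub_self (δ : ℝ) (k l : ℕ) {x : ℝ} (hx : 0 < x) (η : ℝ) :
    iteratedDeriv l (fun η' => iteratedDeriv k (fun x' => eDelta δ (η' / √x') - δ) x) η
      = δ * x ^ (-(k : ℝ) - l / 2) * iteratedDeriv l (scalingDeriv frontDefect k) (η / √x) := by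
  have hfun : (fun η' => iteratedDeriv k (fun x' => eDelta δ (η' / √x') - δ) x)
      = fun η' => δ * x ^ (-(k : ℝ)) * scalingDeriv frontDefect k ((√x)⁻¹ * η') := by
    funext η'
    simp_rw [eDelta_sub_self]
    rw [iteratedDeriv_const_mul_field,
      iteratedDeriv_comp_div_sqrt contDiff_frontDefect η' k hx, div_eq_inv_mul, mul_assoc]
  have hscale : (√x)⁻¹ ^ l = x ^ (-(l : ℝ) / 2) := by
    rw [sqrt_eq_rpow, ← rpow_neg hx.le, ← rpow_natCast, ← rpow_mul hx.le]
    ring_nf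
  rw [hfun, iteratedDeriv_const_mul_field, iteratedDeriv_comp_const_mul
    (contDiff_infty.mp (contDiff_scalingDeriv contDiff_frontDefect k) l), hscale,
    sub_eq_add_neg, rpow_add hx, div_eq_inv_mul η, neg_div]
  ring

lemma exists_abs_pow_mul_frontDefect_le (m : ℕ) :
    ∃ M > 0, ∀ z, 0 ≤ z → |z ^ m * frontDefect z| ≤ M * exp (-z ^ 2 / 16) := by
  obtain ⟨M, hM0, hM⟩ :=
    exists_abs_eval_mul_exp_neg_mul_sq_le (X ^ m) (a := 1 / 16) (by norm_num)
  refine ⟨√2 * M, by positivity, fun z hz => ?_⟩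
  have hsplit : exp (-z ^ 2 / 8) = exp (-(1 / 16) * z ^ 2) * exp (-z ^ 2 / 16) := by
    rw [← exp_add]; ring_nf
  calc |z ^ m * frontDefect z| ≤ |z ^ m| * (√2 * exp (-z ^ 2 / 8)) := by
        rw [abs_mul]; gcongr; exact abs_frontDefect_le hz
    _ = √2 * (|(X ^ m : ℝ[X]).eval z| * exp (-(1 / 16) * z ^ 2)) * exp (-z ^ 2 / 16) := by
        rw [hsplit]; simp only [eval_pow, eval_X]; ring
    _ ≤ √2 * M * exp (-z ^ 2 / 16) := by gcongr; exact hM z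

lemma exists_abs_pow_mul_iteratedDeriv_scalingDeriv_le (m k l : ℕ) :
    ∃ M > 0, ∀ z, 0 ≤ z →
      |z ^ m * iteratedDeriv l (scalingDeriv frontDefect k) z| ≤ M * exp (-z ^ 2 / 16) := by
  have of_isPolyGauss {f : ℝ → ℝ} (hf : IsPolyGauss f) :
      ∃ M > 0, ∀ z, 0 ≤ z → |z ^ m * f z| ≤ M * exp (-z ^ 2 / 16) := by
    obtain ⟨M, hM0, hM⟩ := (hf.poly_mul (X ^ m)).exists_abs_le
    exact ⟨M, hM0, fun z _ => by simpa using hM z⟩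
  rcases k with _ | k
  · rcases l with _ | l
    · simp only [iteratedDeriv_zero]
      exact exists_abs_pow_mul_frontDefect_le m
    · rw [iteratedDeriv_succ']
      exact of_isPolyGauss (isPolyGauss_deriv_frontDefect.iteratedDeriv l)
  · exact of_isPolyGauss
      ((isPolyGauss_scalingDeriv_succ isPolyGauss_deriv_frontDefect k).iteratedDeriv l)

-- For `p = ∞` we have `p.toReal = 0`, so the exponent `1 / (2 * p.toReal)` is `0`.
lemma eLpNorm_exp_neg_sq_div_sqrt_le {p : ℝ≥0∞} (hp : 1 ≤ p) {x : ℝ} (hx : 0 < x) :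
    eLpNorm (fun η => exp (-(η / √x) ^ 2 / 16)) p (volume.restrict (Set.Ioi 0))
      ≤ ENNReal.ofReal (4 * x ^ (1 / (2 * p.toReal))) := by
  rcases eq_or_ne p ∞ with rfl | hp_top
  · rw [eLpNorm_exponent_top]
    refine (eLpNormEssSup_le_of_ae_bound (C := 1) (.of_forall fun η => ?_)).trans ?_
    · rw [norm_of_nonneg (exp_pos _).le, exp_le_one_iff]
      have := sq_nonneg (η / √x)
      linarith
    · simp
  set r := p.toReal with hr_def
  have hr : 1 ≤ r := by simpa using ENNReal.toReal_mono hp_top hp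
  have hr0 : 0 < r := by linarith
  set b := r / (16 * x)
  have hpow : ∀ η : ℝ,
      ‖exp (-(η / √x) ^ 2 / 16)‖ₑ ^ r = ENNReal.ofReal (exp (-b * η ^ 2)) := by
    intro η
    rw [enorm_eq_ofReal (exp_pos _).le, ENNReal.ofReal_rpow_of_pos (exp_pos _), ← exp_mul,
      div_pow, sq_sqrt hx.le]
    simp only [b]
    ring_nf
  rw [eLpNorm_eq_lintegral_rpow_enorm_toReal (by positivity) hp_top, ← hr_def]
  simp_rw [hpow]
  rw [← ofReal_integral_eq_lintegral_ofReal
    (integrable_exp_neg_mul_sq (by positivity)).integrableOn (.of_forall fun η => (exp_pos _).le),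
    integral_gaussian_Ioi,
    ENNReal.ofReal_rpow_of_nonneg (by positivity) (by positivity)]
  refine ENNReal.ofReal_le_ofReal ?_
  have hbase : √(π / b) / 2 ≤ 4 * √x := by
    have : π / b ≤ 8 ^ 2 * x := by
      rw [div_le_iff₀ (by positivity),
        show 8 ^ 2 * x * b = 4 * r by simp only [b]; field_simp; ring]
      linarith [pi_le_four]
    calc √(π / b) / 2 ≤ √(8 ^ 2 * x) / 2 := by gcongr
      _ = 4 * √x := by rw [sqrt_mul (by positivity), sqrt_sq (by norm_num)]; ring
  calc (√(π / b) / 2) ^ (1 / r) ≤ (4 * √x) ^ (1 / r) := by gcongr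
    _ = 4 ^ (1 / r) * x ^ (1 / (2 * r)) := by
        rw [mul_rpow (by norm_num) (sqrt_nonneg x), sqrt_eq_rpow, ← rpow_mul hx.le]
        ring_nf
    _ ≤ 4 * x ^ (1 / (2 * r)) := by
        gcongr
        exact rpow_le_self_of_one_le (by norm_num) ((div_le_one hr0).mpr hr)

theorem stmt3 (m l k : ℕ) :
    ∃ C > (0:ℝ), ∀ δ : ℝ, 0 < δ → ∀ p : ℝ≥0∞, 2 ≤ p → ∀ x : ℝ, 1 ≤ x →
      eLpNorm
        (fun η : ℝ => (η / Real.sqrt x)^m *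
          iteratedDeriv l
            (fun η' => iteratedDeriv k (fun x' => eDelta δ (η' / Real.sqrt x') - δ) x) η)
        p (volume.restrict (Set.Ioi 0))
      ≤ ENNReal.ofReal (C * δ * x ^ (-(k:ℝ) - (l:ℝ)/2 + 1/(2 * p.toReal))) := by
  obtain ⟨M, hM0, hM⟩ := exists_abs_pow_mul_iteratedDeriv_scalingDeriv_le m k l
  refine ⟨4 * M, by positivity, fun δ hδ p hp x hx => ?_⟩
  have hx0 : 0 < x := by linarith
  have hcoef : 0 ≤ δ * x ^ (-(k : ℝ) - l / 2) := by positivity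
  calc _ ≤ eLpNorm ((δ * x ^ (-(k : ℝ) - l / 2) * M) • fun η => exp (-(η / √x) ^ 2 / 16)) p
        (volume.restrict (Set.Ioi 0)) := by
        refine eLpNorm_mono_ae_real (ae_restrict_of_forall_mem measurableSet_Ioi fun η hη => ?_)
        have hz : 0 ≤ η / √x := div_nonneg (Set.mem_Ioi.mp hη).le (sqrt_nonneg x)
        rw [iteratedDeriv_eDelta_sub_self δ k l hx0, norm_eq_abs, Pi.smul_apply, smul_eq_mul,
          mul_left_comm, abs_mul, abs_of_nonneg hcoef, mul_assoc _ M]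
        gcongr
        exact hM _ hz
    _ ≤ ENNReal.ofReal (δ * x ^ (-(k : ℝ) - l / 2) * M) *
          ENNReal.ofReal (4 * x ^ (1 / (2 * p.toReal))) := by
        rw [eLpNorm_const_smul, enorm_eq_ofReal (by positivity)]
        gcongr
        exact eLpNorm_exp_neg_sq_div_sqrt_le (one_le_two.trans hp) hx0
    _ = _ := by
        rw [← ENNReal.ofReal_mul (by positivity), rpow_add hx0]
        ring_nf
end

section
/- Let v be a harmonic function on the open upper half-plane {(x,Y) : Y > 0}, smooth up to the boundary {Y = 0}, and suppose that for every integer k ≥ 0 there is a constant A_k such that sup_{Y ≥ 0} |∂_x^k v(x,Y)| ≤ A_k x^{−k−1/2} for all x ≥ 1. Then: (i) for every integer k ≥ 1 there is a constant C depending only on k and on A₀,…,A_{2k} such that sup_{Y ≥ 0} |∂_Y^k v(x,Y)| ≤ C x^{−k−1/2} for all x ≥ 1; (ii) there is a universal constant C such that sup_{Y ≥ 0} |∂_Y v(x,Y)| ≤ C (A₀ A₂)^{1/2} x^{−3/2} for all x ≥ 1. -/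
/-!
Harmonicity reads `∂_Y² v = -∂_x² v`; since partial derivatives commute, this gives
`∂_Y^{2m} v = (-1)^m ∂_x^{2m} v` and `∂_Y^{2m+1} v = (-1)^m ∂_Y ∂_x^{2m} v`. Even `Y`-derivatives
are thus bounded by the hypotheses directly. For odd ones, `F = ∂_x^{2m} v(x, ·)` is bounded by
`A_{2m} x^{-2m-1/2}` on the half-line and `F'' = -∂_x^{2m+2} v(x, ·)` by `A_{2m+2} x^{-2m-5/2}`,
so Landau's inequality `‖F'‖ ≤ 2 √(‖F‖_∞ ‖F''‖_∞)` gives `2 √(A_{2m} A_{2m+2}) x^{-2m-3/2}`.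
The estimates reach the boundary `Y = 0` by continuity of the one-sided derivatives.
-/

open Set Filter Topology Function
open scoped ContDiff

/-- `v` is harmonic on the open upper half-plane and smooth up to the boundary `{Y = 0}`. -/
def HarmonicUpper (v : ℝ → ℝ → ℝ) : Prop :=
  ContDiffOn ℝ (⊤ : ℕ∞) (fun p : ℝ × ℝ => v p.1 p.2) {p : ℝ × ℝ | 0 ≤ p.2} ∧
  ∀ x Y : ℝ, 0 < Y →
    deriv (fun x' => deriv (fun x'' => v x'' Y) x') x
      + deriv (fun Y' => deriv (fun Y'' => v x Y'') Y') Y = 0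

noncomputable section

variable {E : Type*} [NormedAddCommGroup E] [NormedSpace ℝ E]

theorem le_two_mul_sqrt_of_forall_mul_le {a b c : ℝ} (h : ∀ t > 0, c * t ≤ a + b * t ^ 2) :
    c ≤ 2 * √(a * b) := by
  rcases le_or_gt c 0 with hc | hc
  · exact hc.trans (by positivity)
  rcases le_or_gt b 0 with hb | hb
  · have h' := h ((|a| + 1) / c) (by positivity)
    rw [mul_div_cancel₀ _ hc.ne'] at h'
    nlinarith [le_abs_self a, sq_nonneg ((|a| + 1) / c)]
  · have h' := h (c / (2 * b)) (by positivity)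
    have hc2 : (c / 2) ^ 2 ≤ a * b := by
      rw [div_pow, div_le_iff₀ (by norm_num)]
      field_simp at h'
      nlinarith
    linarith [(Real.le_sqrt' (by positivity)).2 hc2]

theorem norm_sub_sub_smul_le_of_norm_deriv2_le {F F' F'' : ℝ → E} {a M y h : ℝ}
    (hF : ∀ t > a, HasDerivAt F (F' t) t) (hF' : ∀ t > a, HasDerivAt F' (F'' t) t)
    (hF'' : ∀ t > a, ‖F'' t‖ ≤ M) (hy : a < y) (hh : 0 ≤ h) :
    ‖F (y + h) - F y - h • F' y‖ ≤ M * h ^ 2 / 2 := by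
  have hgt : ∀ t ∈ Icc y (y + h), a < t := fun t ht => hy.trans_le ht.1
  have hF'_sub : ∀ t ∈ Icc y (y + h), ‖F' t - F' y‖ ≤ M * (t - y) :=
    norm_image_sub_le_of_norm_deriv_le_segment'
      (fun t ht => (hF' t (hgt t ht)).hasDerivWithinAt)
      (fun t ht => hF'' t (hgt t (Ico_subset_Icc_self ht)))
  have hR : ∀ t ∈ Icc y (y + h), HasDerivAt (fun t => F t - F y - (t - y) • F' y)
      (F' t - F' y) t := fun t ht => by
    simpa using ((hF t (hgt t ht)).sub_const (F y)).fun_sub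
      (((hasDerivAt_id t).sub_const y).smul_const (F' y))
  have hB : ∀ t, HasDerivAt (fun t => M * (t - y) ^ 2 / 2) (M * (t - y)) t := fun t => by
    refine (((((hasDerivAt_id t).sub_const y).fun_pow 2).const_mul M).div_const 2).congr_deriv ?_
    simp only [id, Nat.cast_ofNat]
    ring
  simpa using image_norm_le_of_norm_deriv_right_le_deriv_boundary
    (fun t ht => (hR t ht).continuousAt.continuousWithinAt)
    (fun t ht => (hR t (Ico_subset_Icc_self ht)).hasDerivWithinAt) (by simp) hB
    (fun t ht => hF'_sub t (Ico_subset_Icc_self ht)) (right_mem_Icc.2 (by linarith))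

/-- Landau's inequality on a half-line. -/
theorem norm_deriv_le_two_mul_sqrt_of_norm_le {F F' F'' : ℝ → E} {a M₀ M₂ : ℝ}
    (hF : ∀ t > a, HasDerivAt F (F' t) t) (hF' : ∀ t > a, HasDerivAt F' (F'' t) t)
    (hF₀ : ∀ t > a, ‖F t‖ ≤ M₀) (hF₂ : ∀ t > a, ‖F'' t‖ ≤ M₂) {y : ℝ} (hy : a < y) :
    ‖F' y‖ ≤ 2 * √(M₀ * M₂) := by
  have key : ∀ h > 0, ‖F' y‖ * h ≤ 2 * M₀ + M₂ / 2 * h ^ 2 := fun h hh => by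
    set R := F (y + h) - F y - h • F' y
    calc ‖F' y‖ * h = ‖(F (y + h) - F y) - R‖ := by
          rw [sub_sub_cancel, norm_smul, Real.norm_of_nonneg hh.le, mul_comm]
      _ ≤ ‖F (y + h)‖ + ‖F y‖ + ‖R‖ := (norm_sub_le _ _).trans (by gcongr; exact norm_sub_le _ _)
      _ ≤ M₀ + M₀ + M₂ * h ^ 2 / 2 := by
          gcongr
          exacts [hF₀ _ (by linarith), hF₀ y hy,
            norm_sub_sub_smul_le_of_norm_deriv2_le hF hF' hF₂ hy hh.le]
      _ = 2 * M₀ + M₂ / 2 * h ^ 2 := by ring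
  simpa [show 2 * M₀ * (M₂ / 2) = M₀ * M₂ by ring] using le_two_mul_sqrt_of_forall_mul_le key

theorem ContDiffOn.norm_iteratedDerivWithin_Ici_le {φ : ℝ → E} {a B : ℝ} {n : ℕ∞ω} {k : ℕ}
    (hφ : ContDiffOn ℝ n φ (Ici a)) (hk : k ≤ n) (hB : ∀ y > a, ‖iteratedDeriv k φ y‖ ≤ B)
    {y : ℝ} (hy : a ≤ y) : ‖iteratedDerivWithin k φ (Ici a) y‖ ≤ B := by
  have hint : ∀ y ∈ Ioi a, ‖iteratedDerivWithin k φ (Ici a) y‖ ≤ B := fun y hy => by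
    rw [iteratedDerivWithin_eq_iteratedDeriv (uniqueDiffOn_Ici a)
      ((hφ.contDiffAt (Ici_mem_nhds hy)).of_le hk) (mem_Ici.2 (le_of_lt hy))]
    exact hB y hy
  refine le_on_closure hint ?_ continuousOn_const (by rwa [closure_Ioi])
  rw [closure_Ioi]
  exact (hφ.continuousOn_iteratedDerivWithin hk (uniqueDiffOn_Ici a)).norm

def partialX (g : ℝ × ℝ → E) (p : ℝ × ℝ) : E := deriv (fun t => g (t, p.2)) p.1

def partialY (g : ℝ × ℝ → E) (p : ℝ × ℝ) : E := deriv (fun t => g (p.1, t)) p.2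

section PartialDerivatives

variable {g g₁ g₂ : ℝ × ℝ → E} {p : ℝ × ℝ} {s : Set (ℝ × ℝ)}

theorem partialX_eq_fderiv (hg : DifferentiableAt ℝ g p) : partialX g p = fderiv ℝ g p (1, 0) :=
  (hg.hasFDerivAt.comp_hasDerivAt p.1 ((hasDerivAt_id _).prodMk (hasDerivAt_const _ _))).deriv

theorem partialY_eq_fderiv (hg : DifferentiableAt ℝ g p) : partialY g p = fderiv ℝ g p (0, 1) :=
  (hg.hasFDerivAt.comp_hasDerivAt p.2 ((hasDerivAt_const _ _).prodMk (hasDerivAt_id _))).deriv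

theorem hasDerivAt_partialY (hg : DifferentiableAt ℝ g p) :
    HasDerivAt (fun t => g (p.1, t)) (partialY g p) p.2 :=
  (hg.comp p.2 ((differentiableAt_const _).prodMk differentiableAt_id)).hasDerivAt

theorem Filter.EventuallyEq.partialX_eq (h : g₁ =ᶠ[𝓝 p] g₂) : partialX g₁ p = partialX g₂ p :=
  EventuallyEq.deriv_eq (((continuous_id.prodMk continuous_const).tendsto' _ _ rfl).eventually h)

theorem Filter.EventuallyEq.partialY_eq (h : g₁ =ᶠ[𝓝 p] g₂) : partialY g₁ p = partialY g₂ p :=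
  EventuallyEq.deriv_eq (((continuous_const.prodMk continuous_id).tendsto' _ _ rfl).eventually h)

theorem Set.EqOn.partialX (hs : IsOpen s) (h : EqOn g₁ g₂ s) :
    EqOn (partialX g₁) (partialX g₂) s :=
  fun _ hp => (h.eventuallyEq_of_mem (hs.mem_nhds hp)).partialX_eq

theorem Set.EqOn.partialY (hs : IsOpen s) (h : EqOn g₁ g₂ s) :
    EqOn (partialY g₁) (partialY g₂) s :=
  fun _ hp => (h.eventuallyEq_of_mem (hs.mem_nhds hp)).partialY_eq

theorem partialX_neg (g : ℝ × ℝ → E) : partialX (-g) = -partialX g :=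
  funext fun _ => deriv.neg

theorem partialY_const_smul (c : ℝ) (g : ℝ × ℝ → E) : partialY (c • g) = c • partialY g :=
  funext fun _ => deriv_const_smul_field c _

theorem ContDiffOn.partialX (hg : ContDiffOn ℝ ∞ g s) (hs : IsOpen s) :
    ContDiffOn ℝ ∞ (partialX g) s :=
  (((contDiffOn_infty_iff_fderiv_of_isOpen hs).1 hg).2.clm_apply contDiffOn_const).congr
    fun _ hp => partialX_eq_fderiv ((hg.contDiffAt (hs.mem_nhds hp)).differentiableAt (by simp))

theorem ContDiffOn.partialY (hg : ContDiffOn ℝ ∞ g s) (hs : IsOpen s) :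
    ContDiffOn ℝ ∞ (partialY g) s :=
  (((contDiffOn_infty_iff_fderiv_of_isOpen hs).1 hg).2.clm_apply contDiffOn_const).congr
    fun _ hp => partialY_eq_fderiv ((hg.contDiffAt (hs.mem_nhds hp)).differentiableAt (by simp))

/-- Schwarz's theorem: both mixed partials equal `D²g p (1, 0) (0, 1)`. -/
theorem ContDiffAt.partialX_partialY_comm (hg : ContDiffAt ℝ 2 g p) :
    partialX (partialY g) p = partialY (partialX g) p := by
  have hdiff : ∀ᶠ q in 𝓝 p, DifferentiableAt ℝ g q :=
    (hg.eventually (by simp)).mono fun q hq => hq.differentiableAt (by simp)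
  have hd2 : DifferentiableAt ℝ (fderiv ℝ g) p :=
    (hg.fderiv_right (m := 1) le_rfl).differentiableAt one_ne_zero
  have hY : partialY g =ᶠ[𝓝 p] fun q => fderiv ℝ g q (0, 1) :=
    hdiff.mono fun _ hq => partialY_eq_fderiv hq
  have hX : partialX g =ᶠ[𝓝 p] fun q => fderiv ℝ g q (1, 0) :=
    hdiff.mono fun _ hq => partialX_eq_fderiv hq
  rw [hY.partialX_eq, hX.partialY_eq,
    partialX_eq_fderiv (hd2.clm_apply (differentiableAt_const _)),
    partialY_eq_fderiv (hd2.clm_apply (differentiableAt_const _)),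
    fderiv_clm_apply hd2 (differentiableAt_const _),
    fderiv_clm_apply hd2 (differentiableAt_const _)]
  simpa using hg.isSymmSndFDerivAt (by simp) (1, 0) (0, 1)

theorem iteratedDeriv_slice_fst (g : ℝ × ℝ → E) (y : ℝ) (n : ℕ) :
    iteratedDeriv n (fun t => g (t, y)) = fun t => partialX^[n] g (t, y) := by
  induction n generalizing g with
  | zero => simp
  | succ n ih => rw [iteratedDeriv_succ', iterate_succ_apply]; exact ih (partialX g)

theorem iteratedDeriv_slice_snd (g : ℝ × ℝ → E) (x : ℝ) (n : ℕ) :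
    iteratedDeriv n (fun t => g (x, t)) = fun t => partialY^[n] g (x, t) := by
  induction n generalizing g with
  | zero => simp
  | succ n ih => rw [iteratedDeriv_succ', iterate_succ_apply]; exact ih (partialY g)

end PartialDerivatives

def IsHarmonicOn (g : ℝ × ℝ → E) (s : Set (ℝ × ℝ)) : Prop :=
  ContDiffOn ℝ ∞ g s ∧ EqOn (partialY (partialY g)) (-partialX (partialX g)) s

namespace IsHarmonicOn

variable {g : ℝ × ℝ → E} {s : Set (ℝ × ℝ)}

theorem iterate_partialX (hg : IsHarmonicOn g s) (hs : IsOpen s) (n : ℕ) :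
    IsHarmonicOn (partialX^[n] g) s := by
  have comm : ∀ {w : ℝ × ℝ → E}, ContDiffOn ℝ ∞ w s →
      EqOn (partialX (partialY w)) (partialY (partialX w)) s :=
    fun hw q hq => ((hw.contDiffAt (hs.mem_nhds hq)).of_le ENat.LEInfty.out).partialX_partialY_comm
  induction n with
  | zero => exact hg
  | succ n ih =>
    obtain ⟨hu, hΔu⟩ := ih
    rw [iterate_succ_apply']
    refine ⟨hu.partialX hs, fun p hp => ?_⟩
    calc partialY (partialY (partialX (partialX^[n] g))) p
        = partialY (partialX (partialY (partialX^[n] g))) p := ((comm hu).symm.partialY hs) hp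
      _ = partialX (partialY (partialY (partialX^[n] g))) p := (comm (hu.partialY hs) hp).symm
      _ = _ := by rw [hΔu.partialX hs hp, partialX_neg]

theorem iterate_partialY_two_mul (hg : IsHarmonicOn g s) (hs : IsOpen s) (m : ℕ) :
    EqOn (partialY^[2 * m] g) ((-1 : ℝ) ^ m • partialX^[2 * m] g) s := by
  induction m with
  | zero => intro p _; simp
  | succ m ih =>
    intro p hp
    rw [show 2 * (m + 1) = 2 * m + 1 + 1 by ring, iterate_succ_apply', iterate_succ_apply',
      (ih.partialY hs).partialY hs hp, partialY_const_smul, partialY_const_smul]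
    simp [(hg.iterate_partialX hs (2 * m)).2 hp, iterate_succ_apply', pow_succ]

theorem iterate_partialY_two_mul_add_one (hg : IsHarmonicOn g s) (hs : IsOpen s) (m : ℕ) :
    EqOn (partialY^[2 * m + 1] g) ((-1 : ℝ) ^ m • partialY (partialX^[2 * m] g)) s :=
  fun p hp => by
    rw [iterate_succ_apply', (hg.iterate_partialY_two_mul hs m).partialY hs hp,
      partialY_const_smul]

theorem norm_iterate_partialY_two_mul_add_one_le (hg : IsHarmonicOn g s) (hs : IsOpen s) (m : ℕ)
    {x a M₀ M₂ : ℝ} (hray : ∀ t > a, (x, t) ∈ s)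
    (h₀ : ∀ t > a, ‖partialX^[2 * m] g (x, t)‖ ≤ M₀)
    (h₂ : ∀ t > a, ‖partialX^[2 * m + 2] g (x, t)‖ ≤ M₂) {y : ℝ} (hy : a < y) :
    ‖partialY^[2 * m + 1] g (x, y)‖ ≤ 2 * √(M₀ * M₂) := by
  have hu := hg.iterate_partialX hs (2 * m)
  have hdiff : ∀ {w : ℝ × ℝ → E}, ContDiffOn ℝ ∞ w s → ∀ t > a, DifferentiableAt ℝ w (x, t) :=
    fun hw t ht => (hw.contDiffAt (hs.mem_nhds (hray t ht))).differentiableAt (by simp)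
  have hF₂ : ∀ t > a, ‖partialY (partialY (partialX^[2 * m] g)) (x, t)‖ ≤ M₂ :=
    fun t ht => by
      rw [hu.2 (hray t ht), Pi.neg_apply, norm_neg]
      simpa [iterate_succ_apply'] using h₂ t ht
  have landau := norm_deriv_le_two_mul_sqrt_of_norm_le
    (F := fun t => partialX^[2 * m] g (x, t))
    (fun t ht => hasDerivAt_partialY (hdiff hu.1 t ht))
    (fun t ht => hasDerivAt_partialY (hdiff (hu.1.partialY hs) t ht)) h₀ hF₂ hy
  rw [hg.iterate_partialY_two_mul_add_one hs m (hray y hy)]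
  simpa [norm_smul] using landau

end IsHarmonicOn

theorem Real.sqrt_mul_rpow_mul_mul_rpow {x : ℝ} (hx : 0 < x) (a b α β : ℝ) :
    √(a * x ^ α * (b * x ^ β)) = √(a * b) * x ^ ((α + β) / 2) := by
  have hpow : x ^ α * x ^ β = (x ^ ((α + β) / 2)) ^ 2 := by
    rw [← Real.rpow_natCast, ← Real.rpow_mul hx.le, ← Real.rpow_add hx]
    congr 1
    push_cast
    ring
  rw [show a * x ^ α * (b * x ^ β) = a * b * (x ^ α * x ^ β) by ring, hpow,
    Real.sqrt_mul' _ (sq_nonneg _), Real.sqrt_sq (Real.rpow_nonneg hx.le _)]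

theorem iterate_partialX_uncurry (v : ℝ → ℝ → ℝ) (j : ℕ) (x Y : ℝ) :
    partialX^[j] (uncurry v) (x, Y) = iteratedDeriv j (fun x' => v x' Y) x :=
  (congrFun (iteratedDeriv_slice_fst (uncurry v) Y j) x).symm

namespace HarmonicUpper

variable {v : ℝ → ℝ → ℝ}

theorem isHarmonicOn (hv : HarmonicUpper v) : IsHarmonicOn (uncurry v) {p | 0 < p.2} :=
  ⟨hv.1.mono fun _ hp => (show (0 : ℝ) < _ from hp).le,
    fun p hp => (neg_eq_of_add_eq_zero_right (hv.2 p.1 p.2 hp)).symm⟩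

theorem abs_iteratedDerivWithin_le (hv : HarmonicUpper v) {k : ℕ} {x B : ℝ}
    (h : ∀ Y > 0, ‖partialY^[k] (uncurry v) (x, Y)‖ ≤ B) {Y : ℝ} (hY : 0 ≤ Y) :
    |iteratedDerivWithin k (fun Y' => v x Y') (Ici 0) Y| ≤ B := by
  have hslice : ContDiffOn ℝ ∞ (fun Y' => v x Y') (Ici 0) :=
    hv.1.comp (contDiff_const.prodMk contDiff_id).contDiffOn fun _ ht => ht
  rw [← Real.norm_eq_abs]
  refine hslice.norm_iteratedDerivWithin_Ici_le ENat.LEInfty.out (fun y hy => ?_) hY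
  rw [show iteratedDeriv k (fun Y' => v x Y') y = partialY^[k] (uncurry v) (x, y) from
    congrFun (iteratedDeriv_slice_snd (uncurry v) x k) y]
  exact h y hy

theorem abs_iteratedDerivWithin_two_mul_le (hv : HarmonicUpper v) {m : ℕ} {x B : ℝ}
    (h : ∀ Y > 0, |iteratedDeriv (2 * m) (fun x' => v x' Y) x| ≤ B) {Y : ℝ} (hY : 0 ≤ Y) :
    |iteratedDerivWithin (2 * m) (fun Y' => v x Y') (Ici 0) Y| ≤ B := by
  refine hv.abs_iteratedDerivWithin_le (fun y hy => ?_) hY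
  rw [hv.isHarmonicOn.iterate_partialY_two_mul (isOpen_lt continuous_const continuous_snd) m hy]
  simpa [norm_smul, iterate_partialX_uncurry] using h y hy

theorem abs_iteratedDerivWithin_two_mul_add_one_le (hv : HarmonicUpper v) {m : ℕ} {x A₀ A₂ : ℝ}
    (hx : 0 < x)
    (h₀ : ∀ Y > 0, |iteratedDeriv (2 * m) (fun x' => v x' Y) x| ≤
      A₀ * x ^ (-((2 * m : ℕ) : ℝ) - 1 / 2))
    (h₂ : ∀ Y > 0, |iteratedDeriv (2 * m + 2) (fun x' => v x' Y) x| ≤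
      A₂ * x ^ (-((2 * m + 2 : ℕ) : ℝ) - 1 / 2))
    {Y : ℝ} (hY : 0 ≤ Y) :
    |iteratedDerivWithin (2 * m + 1) (fun Y' => v x Y') (Ici 0) Y| ≤
      2 * √(A₀ * A₂) * x ^ (-((2 * m + 1 : ℕ) : ℝ) - 1 / 2) := by
  refine hv.abs_iteratedDerivWithin_le (fun y hy => ?_) hY
  have landau := hv.isHarmonicOn.norm_iterate_partialY_two_mul_add_one_le
    (isOpen_lt continuous_const continuous_snd) m (fun t (ht : 0 < t) => ht)
    (fun t ht => by rw [iterate_partialX_uncurry, Real.norm_eq_abs]; exact h₀ t ht)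
    (fun t ht => by rw [iterate_partialX_uncurry, Real.norm_eq_abs]; exact h₂ t ht) hy
  rwa [Real.sqrt_mul_rpow_mul_mul_rpow hx, ← mul_assoc, show
    (-((2 * m : ℕ) : ℝ) - 1 / 2 + (-((2 * m + 2 : ℕ) : ℝ) - 1 / 2)) / 2 =
      -((2 * m + 1 : ℕ) : ℝ) - 1 / 2 by push_cast; ring] at landau

end HarmonicUpper

end

theorem stmt8 :
    (∀ k : ℕ, 1 ≤ k → ∀ A : ℕ → ℝ, ∃ C > (0:ℝ), ∀ v : ℝ → ℝ → ℝ,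
      HarmonicUpper v →
      (∀ j : ℕ, j ≤ 2*k → ∀ x : ℝ, 1 ≤ x → ∀ Y : ℝ, 0 ≤ Y →
        |iteratedDeriv j (fun x' => v x' Y) x| ≤ A j * x ^ (-(j:ℝ) - 1/2)) →
      ∀ x : ℝ, 1 ≤ x → ∀ Y : ℝ, 0 ≤ Y →
        |iteratedDerivWithin k (fun Y' => v x Y') (Set.Ici 0) Y| ≤ C * x ^ (-(k:ℝ) - 1/2)) ∧
    (∃ C > (0:ℝ), ∀ v : ℝ → ℝ → ℝ, ∀ A : ℕ → ℝ,
      HarmonicUpper v →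
      (∀ j : ℕ, j ≤ 2 → ∀ x : ℝ, 1 ≤ x → ∀ Y : ℝ, 0 ≤ Y →
        |iteratedDeriv j (fun x' => v x' Y) x| ≤ A j * x ^ (-(j:ℝ) - 1/2)) →
      ∀ x : ℝ, 1 ≤ x → ∀ Y : ℝ, 0 ≤ Y →
        |derivWithin (fun Y' => v x Y') (Set.Ici 0) Y|
          ≤ C * Real.sqrt (A 0 * A 2) * x ^ (-(3:ℝ)/2)) := by
  constructor
  · intro k _ A
    set S := ∑ j ∈ Finset.range (2 * k + 1), |A j|
    have hS : 0 ≤ S := by positivity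
    have hAS : ∀ j ≤ 2 * k, |A j| ≤ S := fun j hj =>
      Finset.single_le_sum (fun i _ => abs_nonneg (A i)) (Finset.mem_range.2 (by omega))
    refine ⟨1 + 2 * S, by positivity, fun v hv h x hx Y hY => ?_⟩
    obtain ⟨m, rfl | rfl⟩ := Nat.even_or_odd' k
    · refine (hv.abs_iteratedDerivWithin_two_mul_le
        (fun Y hY => h (2 * m) (by omega) x hx Y hY.le) hY).trans ?_
      gcongr
      linarith [le_abs_self (A (2 * m)), hAS (2 * m) (by omega)]
    · refine (hv.abs_iteratedDerivWithin_two_mul_add_one_le (by linarith)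
        (fun Y hY => h _ (by omega) x hx Y hY.le)
        (fun Y hY => h _ (by omega) x hx Y hY.le) hY).trans ?_
      have hprod : A (2 * m) * A (2 * m + 2) ≤ S * S :=
        (le_abs_self _).trans ((abs_mul _ _).trans_le
          (mul_le_mul (hAS _ (by omega)) (hAS _ (by omega)) (abs_nonneg _) hS))
      have hsqrt := (Real.sqrt_le_sqrt hprod).trans_eq (Real.sqrt_mul_self hS)
      gcongr
      linarith
  · refine ⟨2, two_pos, fun v A hv h x hx Y hY => ?_⟩
    simpa only [Nat.mul_zero, zero_add, iteratedDerivWithin_one,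
      show -((1 : ℕ) : ℝ) - 1 / 2 = -3 / 2 by norm_num] using
      hv.abs_iteratedDerivWithin_two_mul_add_one_le (m := 0) (by linarith)
        (fun Y hY => h 0 (by norm_num) x hx Y hY.le) (fun Y hY => h 2 le_rfl x hx Y hY.le) hY
end

section
/- Let ε > 0 and let i ≥ 1 be an integer. For j = 1,…,i let (u^j, v^j) be differentiable functions on an open subset of ℝ² (variables (x,Y)), each pair satisfying the Cauchy–Riemann relations ∂_x u^j = −∂_Y v^j and ∂_Y u^j = ∂_x v^j. Define P := −Σ_{j=1}^{i−1} ε^{(j−i)/2} ( v^i v^j + u^i u^j ) − (1/2)( (v^i)² + (u^i)² ), E^u := ε^i ( u^i ∂_x u^i + v^i ∂_Y u^i ) + Σ_{j=1}^{i−1} ε^{(i+j)/2} ( (∂_x u^i) u^j + u^i ∂_x u^j + (∂_Y u^i) v^j + v^i ∂_Y u^j ), and E^v := ε^{i−1/2} ( u^i ∂_x v^i + v^i ∂_Y v^i ) + Σ_{j=1}^{i−1} ε^{(i+j−1)/2} ( u^i ∂_x v^j + (∂_x v^i) u^j + v^i ∂_Y v^j + (∂_Y v^i) v^j ). Then ∂_x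 ( ε^i P ) + E^u = 0 and ε^{−1/2} ∂_Y ( ε^i P ) + E^v = 0 pointwise. -/
/-- Partial derivative in the first (tangential) variable. -/
noncomputable def pdx (f : ℝ → ℝ → ℝ) : ℝ → ℝ → ℝ := fun x Y => deriv (fun x' => f x' Y) x

/-- Partial derivative in the second (normal) variable. -/
noncomputable def pdy (f : ℝ → ℝ → ℝ) : ℝ → ℝ → ℝ := fun x Y => deriv (fun Y' => f x Y') Y

/-!
Write `B_j = u^i u^j + v^i v^j`. Once `∂_Y u = ∂_x v` is substituted, the `j`-th interaction term
of `E^u` is `ε^((i+j)/2) ∂_x B_j`, that of `E^v` is `ε^((i+j-1)/2) ∂_Y B_j`, and the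
self-interaction terms are `ε^i ∂_x` and `ε^(i-1/2) ∂_Y` of `B_i / 2`. Since
`ε^((i+j)/2) = ε^i ε^((j-i)/2)` and `-P = ∑ ε^((j-i)/2) B_j + B_i / 2`, both identities reduce to
the product rule.
-/

open Finset

lemma hasDerivAt_pdx_of_differentiableAt {f : ℝ → ℝ → ℝ} {x Y : ℝ}
    (h : DifferentiableAt ℝ (fun q : ℝ × ℝ => f q.1 q.2) (x, Y)) :
    HasDerivAt (fun x' => f x' Y) (pdx f x Y) x :=
  (show DifferentiableAt ℝ (fun x' => f x' Y) x from
    h.comp (f := fun x' : ℝ => (x', Y)) x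
      (differentiableAt_id.prodMk (differentiableAt_const Y))).hasDerivAt

lemma hasDerivAt_pdy_of_differentiableAt {f : ℝ → ℝ → ℝ} {x Y : ℝ}
    (h : DifferentiableAt ℝ (fun q : ℝ × ℝ => f q.1 q.2) (x, Y)) :
    HasDerivAt (fun Y' => f x Y') (pdy f x Y) Y :=
  (show DifferentiableAt ℝ (fun Y' => f x Y') Y from
    h.comp (f := fun Y' : ℝ => (x, Y')) Y
      ((differentiableAt_const x).prodMk differentiableAt_id)).hasDerivAt

noncomputable def eulerPressure (ε : ℝ) (i : ℕ) (u v : ℕ → ℝ) : ℝ :=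
  -(∑ j ∈ Icc 1 (i - 1), ε ^ (((j : ℝ) - i) / 2) * (v i * v j + u i * u j))
    - 1 / 2 * (v i ^ 2 + u i ^ 2)

lemma hasDerivAt_eulerPressure {ε : ℝ} {i : ℕ} (hi : 1 ≤ i) {u v : ℕ → ℝ → ℝ} {u' v' : ℕ → ℝ}
    {t : ℝ} (hu : ∀ j ∈ Icc 1 i, HasDerivAt (u j) (u' j) t)
    (hv : ∀ j ∈ Icc 1 i, HasDerivAt (v j) (v' j) t) :
    HasDerivAt (fun s => eulerPressure ε i (fun j => u j s) (fun j => v j s))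
      (-(∑ j ∈ Icc 1 (i - 1), ε ^ (((j : ℝ) - i) / 2) *
          (v' i * v j t + v i t * v' j + (u' i * u j t + u i t * u' j)))
        - (v i t * v' i + u i t * u' i)) t := by
  have hmem : i ∈ Icc 1 i := mem_Icc.2 ⟨hi, le_rfl⟩
  have hsub : Icc 1 (i - 1) ⊆ Icc 1 i := Icc_subset_Icc_right (Nat.sub_le i 1)
  have hsum := HasDerivAt.fun_sum (u := Icc 1 (i - 1)) fun j hj =>
    (((hv i hmem).mul (hv j (hsub hj))).add ((hu i hmem).mul (hu j (hsub hj)))).const_mul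
      (ε ^ (((j : ℝ) - i) / 2))
  refine (hsum.fun_neg.fun_sub
    ((((hv i hmem).pow 2).add ((hu i hmem).pow 2)).const_mul (1 / 2))).congr_deriv ?_
  ring

section Balance

variable {ε : ℝ} {i : ℕ} {u v ux uy vx vy : ℕ → ℝ}

lemma euler_tangential_balance (hε : 0 < ε) (hi : 1 ≤ i) (hcr : ∀ j ∈ Icc 1 i, uy j = vx j) :
    ε ^ i * (-(∑ j ∈ Icc 1 (i - 1), ε ^ (((j : ℝ) - i) / 2) *
          (vx i * v j + v i * vx j + (ux i * u j + u i * ux j)))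
        - (v i * vx i + u i * ux i))
      + (ε ^ i * (u i * ux i + v i * uy i)
        + ∑ j ∈ Icc 1 (i - 1), ε ^ (((i : ℝ) + j) / 2) *
            (ux i * u j + u i * ux j + uy i * v j + v i * uy j)) = 0 := by
  have hcri : uy i = vx i := hcr i (mem_Icc.2 ⟨hi, le_rfl⟩)
  have hsum : ∑ j ∈ Icc 1 (i - 1), ε ^ (((i : ℝ) + j) / 2) *
        (ux i * u j + u i * ux j + uy i * v j + v i * uy j)
      = ε ^ i * ∑ j ∈ Icc 1 (i - 1), ε ^ (((j : ℝ) - i) / 2) *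
          (vx i * v j + v i * vx j + (ux i * u j + u i * ux j)) := by
    rw [mul_sum]
    refine sum_congr rfl fun j hj => ?_
    rw [hcri, hcr j (Icc_subset_Icc_right (Nat.sub_le i 1) hj),
      show ((i : ℝ) + j) / 2 = ((j : ℝ) - i) / 2 + i by ring, Real.rpow_add_natCast hε.ne']
    ring
  rw [hsum, hcri]
  ring

lemma euler_normal_balance (hε : 0 < ε) (hi : 1 ≤ i) (hcr : ∀ j ∈ Icc 1 i, uy j = vx j) :
    ε ^ (-(1 : ℝ) / 2) * (ε ^ i * (-(∑ j ∈ Icc 1 (i - 1), ε ^ (((j : ℝ) - i) / 2) *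
          (vy i * v j + v i * vy j + (uy i * u j + u i * uy j)))
        - (v i * vy i + u i * uy i)))
      + (ε ^ ((i : ℝ) - 1 / 2) * (u i * vx i + v i * vy i)
        + ∑ j ∈ Icc 1 (i - 1), ε ^ (((i : ℝ) + j - 1) / 2) *
            (u i * vx j + vx i * u j + v i * vy j + vy i * v j)) = 0 := by
  have hcri : uy i = vx i := hcr i (mem_Icc.2 ⟨hi, le_rfl⟩)
  have hsum : ∑ j ∈ Icc 1 (i - 1), ε ^ (((i : ℝ) + j - 1) / 2) *
        (u i * vx j + vx i * u j + v i * vy j + vy i * v j)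
      = ε ^ (-(1 : ℝ) / 2) * ε ^ i * ∑ j ∈ Icc 1 (i - 1), ε ^ (((j : ℝ) - i) / 2) *
          (vy i * v j + v i * vy j + (uy i * u j + u i * uy j)) := by
    rw [mul_sum]
    refine sum_congr rfl fun j hj => ?_
    rw [hcri, hcr j (Icc_subset_Icc_right (Nat.sub_le i 1) hj),
      show ((i : ℝ) + j - 1) / 2 = -(1 : ℝ) / 2 + (((j : ℝ) - i) / 2 + i) by ring,
      Real.rpow_add hε, Real.rpow_add_natCast hε.ne']
    ring
  rw [hsum, hcri,
    show (i : ℝ) - 1 / 2 = -(1 : ℝ) / 2 + i by ring, Real.rpow_add_natCast hε.ne']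
  ring

end Balance

theorem stmt11_general (ε : ℝ) (hε : 0 < ε) (i : ℕ) (hi : 1 ≤ i)
    (U : Set (ℝ × ℝ)) (u v : ℕ → ℝ → ℝ → ℝ)
    (hdiff : ∀ j : ℕ, 1 ≤ j → j ≤ i → ∀ p ∈ U,
      DifferentiableAt ℝ (fun q : ℝ × ℝ => u j q.1 q.2) p ∧
      DifferentiableAt ℝ (fun q : ℝ × ℝ => v j q.1 q.2) p)
    (hcr2 : ∀ j : ℕ, 1 ≤ j → j ≤ i → ∀ p ∈ U, pdy (u j) p.1 p.2 = pdx (v j) p.1 p.2)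
    (P Eu Ev : ℝ → ℝ → ℝ)
    (hP : ∀ x Y : ℝ, P x Y =
      -(∑ j ∈ Finset.Icc 1 (i-1), ε ^ (((j:ℝ) - (i:ℝ))/2) *
          (v i x Y * v j x Y + u i x Y * u j x Y))
        - (1/2) * ((v i x Y)^2 + (u i x Y)^2))
    (hEu : ∀ x Y : ℝ, Eu x Y =
      ε ^ i * (u i x Y * pdx (u i) x Y + v i x Y * pdy (u i) x Y)
        + ∑ j ∈ Finset.Icc 1 (i-1), ε ^ (((i:ℝ) + (j:ℝ))/2) *
            (pdx (u i) x Y * u j x Y + u i x Y * pdx (u j) x Y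
              + pdy (u i) x Y * v j x Y + v i x Y * pdy (u j) x Y))
    (hEv : ∀ x Y : ℝ, Ev x Y =
      ε ^ ((i:ℝ) - 1/2) * (u i x Y * pdx (v i) x Y + v i x Y * pdy (v i) x Y)
        + ∑ j ∈ Finset.Icc 1 (i-1), ε ^ (((i:ℝ) + (j:ℝ) - 1)/2) *
            (u i x Y * pdx (v j) x Y + pdx (v i) x Y * u j x Y
              + v i x Y * pdy (v j) x Y + pdy (v i) x Y * v j x Y)) :
    ∀ p ∈ U,
      pdx (fun x Y => ε ^ i * P x Y) p.1 p.2 + Eu p.1 p.2 = 0 ∧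
      ε ^ (-(1:ℝ)/2) * pdy (fun x Y => ε ^ i * P x Y) p.1 p.2 + Ev p.1 p.2 = 0 := by
  rintro ⟨a, b⟩ hp
  obtain rfl : P = fun x Y => eulerPressure ε i (fun j => u j x Y) (fun j => v j x Y) :=
    funext fun x => funext fun Y => hP x Y
  have hd : ∀ j ∈ Icc 1 i, DifferentiableAt ℝ (fun q : ℝ × ℝ => u j q.1 q.2) (a, b) ∧
      DifferentiableAt ℝ (fun q : ℝ × ℝ => v j q.1 q.2) (a, b) :=
    fun j hj => hdiff j (mem_Icc.1 hj).1 (mem_Icc.1 hj).2 _ hp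
  have hcr : ∀ j ∈ Icc 1 i, pdy (u j) a b = pdx (v j) a b :=
    fun j hj => hcr2 j (mem_Icc.1 hj).1 (mem_Icc.1 hj).2 _ hp
  have hPx := (hasDerivAt_eulerPressure (ε := ε) hi
    (fun j hj => hasDerivAt_pdx_of_differentiableAt (hd j hj).1)
    (fun j hj => hasDerivAt_pdx_of_differentiableAt (hd j hj).2)).const_mul (ε ^ i)
  have hPy := (hasDerivAt_eulerPressure (ε := ε) hi
    (fun j hj => hasDerivAt_pdy_of_differentiableAt (hd j hj).1)
    (fun j hj => hasDerivAt_pdy_of_differentiableAt (hd j hj).2)).const_mul (ε ^ i)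
  refine ⟨?_, ?_⟩
  · rw [pdx, hPx.deriv, hEu]
    exact euler_tangential_balance (u := fun j => u j a b) (v := fun j => v j a b)
      (ux := fun j => pdx (u j) a b) (uy := fun j => pdy (u j) a b)
      (vx := fun j => pdx (v j) a b) hε hi hcr
  · rw [pdy, hPy.deriv, hEv]
    exact euler_normal_balance (u := fun j => u j a b) (v := fun j => v j a b)
      (uy := fun j => pdy (u j) a b) (vx := fun j => pdx (v j) a b)
      (vy := fun j => pdy (v j) a b) hε hi hcr

theorem stmt11 (ε : ℝ) (hε : 0 < ε) (i : ℕ) (hi : 1 ≤ i)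
    (U : Set (ℝ × ℝ)) (hU : IsOpen U) (u v : ℕ → ℝ → ℝ → ℝ)
    (hdiff : ∀ j : ℕ, 1 ≤ j → j ≤ i → ∀ p ∈ U,
      DifferentiableAt ℝ (fun q : ℝ × ℝ => u j q.1 q.2) p ∧
      DifferentiableAt ℝ (fun q : ℝ × ℝ => v j q.1 q.2) p)
    (hcr1 : ∀ j : ℕ, 1 ≤ j → j ≤ i → ∀ p ∈ U, pdx (u j) p.1 p.2 = - pdy (v j) p.1 p.2)
    (hcr2 : ∀ j : ℕ, 1 ≤ j → j ≤ i → ∀ p ∈ U, pdy (u j) p.1 p.2 = pdx (v j) p.1 p.2)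
    (P Eu Ev : ℝ → ℝ → ℝ)
    (hP : ∀ x Y : ℝ, P x Y =
      -(∑ j ∈ Finset.Icc 1 (i-1), ε ^ (((j:ℝ) - (i:ℝ))/2) *
          (v i x Y * v j x Y + u i x Y * u j x Y))
        - (1/2) * ((v i x Y)^2 + (u i x Y)^2))
    (hEu : ∀ x Y : ℝ, Eu x Y =
      ε ^ i * (u i x Y * pdx (u i) x Y + v i x Y * pdy (u i) x Y)
        + ∑ j ∈ Finset.Icc 1 (i-1), ε ^ (((i:ℝ) + (j:ℝ))/2) *
            (pdx (u i) x Y * u j x Y + u i x Y * pdx (u j) x Y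
              + pdy (u i) x Y * v j x Y + v i x Y * pdy (u j) x Y))
    (hEv : ∀ x Y : ℝ, Ev x Y =
      ε ^ ((i:ℝ) - 1/2) * (u i x Y * pdx (v i) x Y + v i x Y * pdy (v i) x Y)
        + ∑ j ∈ Finset.Icc 1 (i-1), ε ^ (((i:ℝ) + (j:ℝ) - 1)/2) *
            (u i x Y * pdx (v j) x Y + pdx (v i) x Y * u j x Y
              + v i x Y * pdy (v j) x Y + pdy (v i) x Y * v j x Y)) :
    ∀ p ∈ U,
      pdx (fun x Y => ε ^ i * P x Y) p.1 p.2 + Eu p.1 p.2 = 0 ∧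
      ε ^ (-(1:ℝ)/2) * pdy (fun x Y => ε ^ i * P x Y) p.1 p.2 + Ev p.1 p.2 = 0 :=
  stmt11_general ε hε i hi U u v hdiff hcr2 P Eu Ev hP hEu hEv
end

section
/- For every κ ∈ (0, 1/2) there is a constant C(κ) such that for every continuously differentiable function v : (0,∞) → ℝ with v(y) → 0 as y → ∞: sup_{y > 0} |v(y)|² ≤ C(κ) ( ∫₀^∞ y^{1−2κ} v'(y)² dy )^{1/2} ( ∫₀^∞ y^{1+2κ} v'(y)² dy )^{1/2}. -/
/-!
By the fundamental theorem of calculus, `|v y| ≤ ∫₀^∞ |v'|`. Split this integral at a radius `R`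
and apply Cauchy–Schwarz with the weight `t ^ (1 - 2κ)` on `(0, R]` and `t ^ (1 + 2κ)` on
`(R, ∞)`: the dual weights `t ^ (2κ - 1)` and `t ^ (-1 - 2κ)` are integrable there precisely
because `κ > 0`, so `∫₀^∞ |v'| ≤ √(A R^{2κ} / 2κ) + √(B R^{-2κ} / 2κ)`, where `A` and `B` are the
two weighted energies. Choosing `R` to balance the two terms gives `|v y|² ≤ (2/κ) √A √B`.
-/

open MeasureTheory Set Filter Topology
open scoped ENNReal

theorem enorm_le_lintegral_Ioi_enorm_deriv {v : ℝ → ℝ} {a : ℝ}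
    (hv : ∀ x ∈ Ici a, DifferentiableAt ℝ v x) (hv0 : Tendsto v atTop (𝓝 0)) :
    ‖v a‖ₑ ≤ ∫⁻ t in Ioi a, ‖deriv v t‖ₑ := by
  by_cases hint : IntegrableOn (deriv v) (Ioi a)
  · have hftc : ∫ t in Ioi a, deriv v t = 0 - v a :=
      integral_Ioi_of_hasDerivAt_of_tendsto' (fun x hx => (hv x hx).hasDerivAt) hint hv0
    calc ‖v a‖ₑ = ‖∫ t in Ioi a, deriv v t‖ₑ := by rw [hftc, zero_sub, enorm_neg]
      _ ≤ ∫⁻ t in Ioi a, ‖deriv v t‖ₑ := enorm_integral_le_lintegral_enorm _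
  · have htop : ∫⁻ t in Ioi a, ‖deriv v t‖ₑ = ∞ := by
      by_contra h
      exact hint ⟨(measurable_deriv v).aestronglyMeasurable, lt_top_iff_ne_top.2 h⟩
    simp [htop]

theorem lintegral_Ioc_rpow {a R : ℝ} (ha : -1 < a) (hR : 0 < R) :
    ∫⁻ t in Ioc 0 R, ENNReal.ofReal (t ^ a) = ENNReal.ofReal (R ^ (a + 1) / (a + 1)) := by
  have hi : IntegrableOn (fun t : ℝ => t ^ a) (Ioc 0 R) :=
    (intervalIntegrable_iff_integrableOn_Ioc_of_le hR.le).mp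
      (intervalIntegral.intervalIntegrable_rpow' ha)
  rw [← ofReal_integral_eq_lintegral_ofReal hi
    (ae_restrict_of_forall_mem measurableSet_Ioc fun t ht => Real.rpow_nonneg ht.1.le a),
    ← intervalIntegral.integral_of_le hR.le, integral_rpow (Or.inl ha),
    Real.zero_rpow (by linarith), sub_zero]

theorem lintegral_Ioi_rpow {a R : ℝ} (ha : a < -1) (hR : 0 < R) :
    ∫⁻ t in Ioi R, ENNReal.ofReal (t ^ a) = ENNReal.ofReal (-R ^ (a + 1) / (a + 1)) := by
  rw [← ofReal_integral_eq_lintegral_ofReal (integrableOn_Ioi_rpow_of_lt ha hR)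
    (ae_restrict_of_forall_mem measurableSet_Ioi fun t ht => Real.rpow_nonneg (hR.trans ht).le a),
    integral_Ioi_rpow_of_lt ha hR]

theorem lintegral_enorm_le_weighted {f : ℝ → ℝ} (hf : Measurable f) {s : Set ℝ}
    (hs : MeasurableSet s) (hs0 : s ⊆ Ioi 0) (c : ℝ) :
    ∫⁻ t in s, ‖f t‖ₑ ≤ (∫⁻ t in s, ENNReal.ofReal (t ^ c * f t ^ 2)) ^ (1 / 2 : ℝ) *
      (∫⁻ t in s, ENNReal.ofReal (t ^ (-c))) ^ (1 / 2 : ℝ) := by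
  let F : ℝ → ℝ≥0∞ := fun t => ENNReal.ofReal (t ^ c * f t ^ 2) ^ (1 / 2 : ℝ)
  let G : ℝ → ℝ≥0∞ := fun t => ENNReal.ofReal (t ^ (-c)) ^ (1 / 2 : ℝ)
  have hsq (x : ℝ≥0∞) : (x ^ (1 / 2 : ℝ)) ^ (2 : ℝ) = x := by
    rw [← ENNReal.rpow_mul]; norm_num
  calc ∫⁻ t in s, ‖f t‖ₑ = ∫⁻ t in s, (F * G) t := by
        refine setLIntegral_congr_fun hs fun t ht => ?_
        have ht0 : 0 < t := hs0 ht
        rw [Pi.mul_apply, ← ENNReal.mul_rpow_of_nonneg _ _ (by norm_num),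
          ← ENNReal.ofReal_mul (by positivity), Real.enorm_eq_ofReal_abs,
          show t ^ c * f t ^ 2 * t ^ (-c) = |f t| ^ 2 by
            rw [Real.rpow_neg ht0.le, sq_abs]; field_simp,
          ENNReal.ofReal_pow (abs_nonneg _), ← ENNReal.rpow_natCast, ← ENNReal.rpow_mul]
        norm_num
    _ ≤ (∫⁻ t in s, F t ^ (2 : ℝ)) ^ (1 / 2 : ℝ) * (∫⁻ t in s, G t ^ (2 : ℝ)) ^ (1 / 2 : ℝ) :=
        ENNReal.lintegral_mul_le_Lp_mul_Lq _ Real.HolderConjugate.two_two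
          (by simp only [F]; fun_prop) (by simp only [G]; fun_prop)
    _ = _ := by simp only [F, G, hsq]

theorem lintegral_enorm_le_split {f : ℝ → ℝ} (hf : Measurable f) {κ R : ℝ} (hκ : 0 < κ)
    (hR : 0 < R) :
    ∫⁻ t in Ioi 0, ‖f t‖ₑ ≤
      ((∫⁻ t in Ioi 0, ENNReal.ofReal (t ^ (1 - 2 * κ) * f t ^ 2)) *
        ENNReal.ofReal (R ^ (2 * κ) / (2 * κ))) ^ (1 / 2 : ℝ) +
      ((∫⁻ t in Ioi 0, ENNReal.ofReal (t ^ (1 + 2 * κ) * f t ^ 2)) *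
        ENNReal.ofReal (R ^ (-(2 * κ)) / (2 * κ))) ^ (1 / 2 : ℝ) := by
  have hnear : ∫⁻ t in Ioc 0 R, ENNReal.ofReal (t ^ (-(1 - 2 * κ))) =
      ENNReal.ofReal (R ^ (2 * κ) / (2 * κ)) := by
    rw [lintegral_Ioc_rpow (by linarith) hR]; ring_nf
  have hfar : ∫⁻ t in Ioi R, ENNReal.ofReal (t ^ (-(1 + 2 * κ))) =
      ENNReal.ofReal (R ^ (-(2 * κ)) / (2 * κ)) := by
    rw [lintegral_Ioi_rpow (by linarith) hR]; ring_nf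
  calc ∫⁻ t in Ioi 0, ‖f t‖ₑ = (∫⁻ t in Ioc 0 R, ‖f t‖ₑ) + ∫⁻ t in Ioi R, ‖f t‖ₑ := by
        rw [← lintegral_union measurableSet_Ioi Ioc_disjoint_Ioi_same,
          Ioc_union_Ioi_eq_Ioi hR.le]
    _ ≤ (∫⁻ t in Ioc 0 R, ENNReal.ofReal (t ^ (1 - 2 * κ) * f t ^ 2)) ^ (1 / 2 : ℝ) *
          (∫⁻ t in Ioc 0 R, ENNReal.ofReal (t ^ (-(1 - 2 * κ)))) ^ (1 / 2 : ℝ) +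
        (∫⁻ t in Ioi R, ENNReal.ofReal (t ^ (1 + 2 * κ) * f t ^ 2)) ^ (1 / 2 : ℝ) *
          (∫⁻ t in Ioi R, ENNReal.ofReal (t ^ (-(1 + 2 * κ)))) ^ (1 / 2 : ℝ) :=
        add_le_add
          (lintegral_enorm_le_weighted hf measurableSet_Ioc Ioc_subset_Ioi_self _)
          (lintegral_enorm_le_weighted hf measurableSet_Ioi (Ioi_subset_Ioi hR.le) _)
    _ ≤ _ := by
        rw [hnear, hfar, ENNReal.mul_rpow_of_nonneg _ _ (by norm_num),
          ENNReal.mul_rpow_of_nonneg _ _ (by norm_num)]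
        gcongr ?_ ^ _ * _ + ?_ ^ _ * _
        · exact lintegral_mono_set Ioc_subset_Ioi_self
        · exact lintegral_mono_set (Ioi_subset_Ioi hR.le)

theorem exists_rpow_balance {a b p : ℝ} (ha : 0 < a) (hb : 0 < b) (hp : p ≠ 0) :
    ∃ R > 0, a * R ^ p = √a * √b ∧ b * R ^ (-p) = √a * √b := by
  have hq : 0 < √b / √a := by positivity
  refine ⟨(√b / √a) ^ p⁻¹, by positivity, ?_, ?_⟩
  · rw [Real.rpow_inv_rpow hq.le hp]
    nth_rw 1 [← Real.mul_self_sqrt ha.le]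
    field_simp
  · rw [Real.rpow_neg (by positivity), Real.rpow_inv_rpow hq.le hp]
    nth_rw 1 [← Real.mul_self_sqrt hb.le]
    field_simp

theorem ENNReal.rpow_one_half_eq_ofReal_sqrt {x : ℝ≥0∞} (hx : x ≠ ∞) :
    x ^ (1 / 2 : ℝ) = ENNReal.ofReal √x.toReal := by
  rw [Real.sqrt_eq_rpow, ← ENNReal.ofReal_rpow_of_nonneg ENNReal.toReal_nonneg (by norm_num),
    ENNReal.ofReal_toReal hx]

theorem sq_lintegral_enorm_le_weighted {f : ℝ → ℝ} (hf : Measurable f) {κ : ℝ} (hκ : 0 < κ) :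
    (∫⁻ t in Ioi 0, ‖f t‖ₑ) ^ 2 ≤ ENNReal.ofReal (2 / κ) *
      (∫⁻ t in Ioi 0, ENNReal.ofReal (t ^ (1 - 2 * κ) * f t ^ 2)) ^ (1 / 2 : ℝ) *
      (∫⁻ t in Ioi 0, ENNReal.ofReal (t ^ (1 + 2 * κ) * f t ^ 2)) ^ (1 / 2 : ℝ) := by
  -- `0 * ∞ = 0` in `ℝ≥0∞`, so this holds although `t ^ (-c)` is not integrable on `(0, ∞)`.
  have hdegenerate (c : ℝ) (h : ∫⁻ t in Ioi 0, ENNReal.ofReal (t ^ c * f t ^ 2) = 0) :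
      ∫⁻ t in Ioi 0, ‖f t‖ₑ = 0 := by
    have := lintegral_enorm_le_weighted hf measurableSet_Ioi subset_rfl c
    rwa [h, ENNReal.zero_rpow_of_pos (by norm_num), zero_mul, nonpos_iff_eq_zero] at this
  set A := ∫⁻ t in Ioi 0, ENNReal.ofReal (t ^ (1 - 2 * κ) * f t ^ 2) with hA
  set B := ∫⁻ t in Ioi 0, ENNReal.ofReal (t ^ (1 + 2 * κ) * f t ^ 2) with hB
  rcases eq_or_ne A 0 with hA0 | hA0
  · simp [hdegenerate _ hA0]
  rcases eq_or_ne B 0 with hB0 | hB0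
  · simp [hdegenerate _ hB0]
  rcases eq_or_ne A ∞ with hAtop | hAtop
  · simp [hAtop, hB0, hκ]
  rcases eq_or_ne B ∞ with hBtop | hBtop
  · simp [hBtop, hA0, hκ]
  have ha : 0 < A.toReal := ENNReal.toReal_pos hA0 hAtop
  have hb : 0 < B.toReal := ENNReal.toReal_pos hB0 hBtop
  obtain ⟨R, hR, hRa, hRb⟩ := exists_rpow_balance ha hb (by positivity : 2 * κ ≠ 0)
  set s := √A.toReal * √B.toReal / (2 * κ)
  have hAR : A * ENNReal.ofReal (R ^ (2 * κ) / (2 * κ)) = ENNReal.ofReal s := by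
    rw [← ENNReal.ofReal_toReal hAtop, ← ENNReal.ofReal_mul ha.le, ← mul_div_assoc, hRa]
  have hBR : B * ENNReal.ofReal (R ^ (-(2 * κ)) / (2 * κ)) = ENNReal.ofReal s := by
    rw [← ENNReal.ofReal_toReal hBtop, ← ENNReal.ofReal_mul hb.le, ← mul_div_assoc, hRb]
  have hsplit := lintegral_enorm_le_split hf hκ hR
  rw [← hA, ← hB, hAR, hBR, ENNReal.rpow_one_half_eq_ofReal_sqrt ENNReal.ofReal_ne_top,
    ENNReal.toReal_ofReal (by positivity), ← two_mul] at hsplit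
  calc (∫⁻ t in Ioi 0, ‖f t‖ₑ) ^ 2 ≤ (2 * ENNReal.ofReal √s) ^ 2 := by gcongr
    _ = ENNReal.ofReal (2 / κ) * A ^ (1 / 2 : ℝ) * B ^ (1 / 2 : ℝ) := by
      rw [ENNReal.rpow_one_half_eq_ofReal_sqrt hAtop, ENNReal.rpow_one_half_eq_ofReal_sqrt hBtop,
        ← ENNReal.ofReal_ofNat, ← ENNReal.ofReal_mul (by norm_num),
        ← ENNReal.ofReal_pow (by positivity), ← ENNReal.ofReal_mul (by positivity),
        ← ENNReal.ofReal_mul (by positivity), mul_pow, Real.sq_sqrt (by positivity)]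
      congr 1
      simp only [s]
      field_simp

theorem stmt14_general (κ : ℝ) (hκ0 : 0 < κ) :
    ∃ C > (0:ℝ), ∀ v : ℝ → ℝ, ContDiffOn ℝ 1 v (Set.Ioi 0) →
      Filter.Tendsto v Filter.atTop (nhds 0) →
      ∀ y : ℝ, 0 < y →
        ENNReal.ofReal ((v y)^2)
          ≤ ENNReal.ofReal C *
            (∫⁻ t in Set.Ioi (0:ℝ), ENNReal.ofReal (t ^ (1 - 2*κ) * (deriv v t)^2)) ^ ((1:ℝ)/2) *
            (∫⁻ t in Set.Ioi (0:ℝ), ENNReal.ofReal (t ^ (1 + 2*κ) * (deriv v t)^2)) ^ ((1:ℝ)/2) := by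
  refine ⟨2 / κ, by positivity, fun v hv hv0 y hy => ?_⟩
  have hdiff (x : ℝ) (hx : x ∈ Ici y) : DifferentiableAt ℝ v x :=
    (hv.differentiableOn one_ne_zero).differentiableAt (Ioi_mem_nhds (hy.trans_le hx))
  calc ENNReal.ofReal (v y ^ 2) = ‖v y‖ₑ ^ 2 := by
        rw [Real.enorm_eq_ofReal_abs, ← ENNReal.ofReal_pow (abs_nonneg _), sq_abs]
    _ ≤ (∫⁻ t in Ioi y, ‖deriv v t‖ₑ) ^ 2 := by
        gcongr; exact enorm_le_lintegral_Ioi_enorm_deriv hdiff hv0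
    _ ≤ (∫⁻ t in Ioi 0, ‖deriv v t‖ₑ) ^ 2 := by gcongr
    _ ≤ _ := sq_lintegral_enorm_le_weighted (measurable_deriv v) hκ0

theorem stmt14 (κ : ℝ) (hκ0 : 0 < κ) (hκ1 : κ < 1/2) :
    ∃ C > (0:ℝ), ∀ v : ℝ → ℝ, ContDiffOn ℝ 1 v (Set.Ioi 0) →
      Filter.Tendsto v Filter.atTop (nhds 0) →
      ∀ y : ℝ, 0 < y →
        ENNReal.ofReal ((v y)^2)
          ≤ ENNReal.ofReal C *
            (∫⁻ t in Set.Ioi (0:ℝ), ENNReal.ofReal (t ^ (1 - 2*κ) * (deriv v t)^2)) ^ ((1:ℝ)/2) *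
            (∫⁻ t in Set.Ioi (0:ℝ), ENNReal.ofReal (t ^ (1 + 2*κ) * (deriv v t)^2)) ^ ((1:ℝ)/2) :=
  stmt14_general κ hκ0
end
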